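/- arXiv:1901.00963 — 2 statements merged into one kernel-verified Lean document; each statement's English description precedes it below -/
import Mathlib

section
/- Let f : ℕ × ℕ × {0,1} → ℝ be a nonnegative function belonging to the class ℱ. Then for all q₁ ≥ 1, 2·f(0,q₁,1) ≤ f(1,q₁,1) + f(0,q₁−1,1). -/
/-- The class ℱ of functions `f : ℕ × ℕ × {0,1} → ℝ` (with `l₂ : Fin 2`)
satisfying the nine properties (F1)–(F9) together with nonnegativity. -/
structure InClassF (f : ℕ → ℕ → Fin 2 → ℝ) : Prop where
  nonneg : ∀ x q₁ l₂, 0 ≤ f x q₁ l₂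
  F1 : ∀ x q₁, f (x+1) q₁ 0 + f (x+1) q₁ 1 ≤ f x q₁ 1 + f (x+2) q₁ 0
  F2 : ∀ x q₁, f (x+1) q₁ 0 + f x (q₁+1) 1 ≤ f x q₁ 1 + f (x+1) (q₁+1) 0
  F3 : ∀ q₁, f 0 (q₁+1) 0 + f 0 (q₁+1) 1 ≤ f 0 q₁ 1 + f 0 (q₁+2) 0
  F4 : ∀ x q₁ l₂, f x (q₁+1) l₂ ≤ f (x+1) q₁ l₂
  F5 : ∀ x q₁, f x q₁ 1 + f (x+1) q₁ 0 ≤ f x q₁ 0 + f (x+1) q₁ 1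
  F6 : ∀ x q₁, f x q₁ 1 + f x (q₁+1) 0 ≤ f x q₁ 0 + f x (q₁+1) 1
  F7 : ∀ x q₁ l₂, f x q₁ l₂ ≤ f (x+1) q₁ l₂
  F8 : ∀ x q₁ l₂, f x q₁ l₂ ≤ f x (q₁+1) l₂
  F9 : ∀ x q₁, f x q₁ 0 ≤ f x q₁ 1

theorem InClassF.two_mul_le_add {f : ℕ → ℕ → Fin 2 → ℝ} (hf : InClassF f) (x q : ℕ) :
    2 * f x (q + 1) 1 ≤ f (x + 1) (q + 1) 1 + f x q 1 := by
  linarith [hf.F2 x q, hf.F5 x (q + 1), hf.F4 x q 0]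

theorem stmt_1 (f : ℕ → ℕ → Fin 2 → ℝ) (hf : InClassF f) :
    ∀ q₁ : ℕ, 1 ≤ q₁ → 2 * f 0 q₁ 1 ≤ f 1 q₁ 1 + f 0 (q₁ - 1) 1 := by
  rintro (_ | q) hq
  · omega
  · exact hf.two_mul_le_add 0 q
end

section
/- Let J : ℕ × ℕ × {0,1} → ℝ be a nonnegative function belonging to the class ℱ, and let T be the intermediate-value function obtained from J. Then T satisfies the supermodularity property (F5): for all x, q₁ ∈ ℕ, T(x,q₁,1) + T(x+1,q₁,0) ≤ T(x,q₁,0) + T(x+1,q₁,1). -/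
/-- The intermediate-value function `T` obtained from `J`:
`T(x,q₁,1) = J(x,q₁,1)`, `T(0,0,0) = J(0,0,0)`,
`T(x,q₁,0) = min{J(x,q₁,0), J(x−1,q₁,1)}` for `x ≥ 1`, and
`T(0,q₁,0) = min{J(0,q₁,0), J(0,q₁−1,1)}` for `q₁ ≥ 1`. -/
noncomputable def interT (J : ℕ → ℕ → Fin 2 → ℝ) : ℕ → ℕ → Fin 2 → ℝ :=
  fun x q₁ l₂ =>
    if l₂ = (1 : Fin 2) then J x q₁ 1
    else
      match x, q₁ with
      | 0, 0 => J 0 0 0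
      | x' + 1, q' => min (J (x' + 1) q' 0) (J x' q' 1)
      | 0, q' + 1 => min (J 0 (q' + 1) 0) (J 0 q' 1)

/-
Each value `T(x,q₁,0)` other than `T(0,0,0)` is the minimum of `J(x,q₁,0)` and the
value `J(p,1)` at the predecessor `p` of `(x,q₁)`, namely `(x-1,q₁)` or `(0,q₁-1)`. Against
`J(x,q₁,0)` the inequality is (F5) for `J`, since `T(x+1,q₁,0) ≤ J(x+1,q₁,0)`. Against `J(p,1)` it
suffices, since `T(x+1,q₁,0) ≤ J(x,q₁,1)`, that `J(·,1)` is midpoint convex along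
`p, (x,q₁), (x+1,q₁)`: this is (F1)+(F5) in the interior and (F2)+(F4)+(F5) on the boundary `x = 0`.
-/

namespace InClassF

variable {f : ℕ → ℕ → Fin 2 → ℝ}

theorem two_mul_le_pred_add_succ (hf : InClassF f) (x q₁ : ℕ) :
    2 * f (x + 1) q₁ 1 ≤ f x q₁ 1 + f (x + 2) q₁ 1 := by
  linarith [hf.F1 x q₁, hf.F5 (x + 1) q₁]

theorem two_mul_le_pred_add_succ_of_boundary (hf : InClassF f) (q₁ : ℕ) :
    2 * f 0 (q₁ + 1) 1 ≤ f 0 q₁ 1 + f 1 (q₁ + 1) 1 := by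
  linarith [hf.F2 0 q₁, hf.F4 0 q₁ 0, hf.F5 0 (q₁ + 1)]

end InClassF

section interT

variable (J : ℕ → ℕ → Fin 2 → ℝ)

theorem interT_one (x q₁ : ℕ) : interT J x q₁ 1 = J x q₁ 1 := rfl

theorem interT_zero_zero_zero : interT J 0 0 0 = J 0 0 0 := rfl

theorem interT_succ_zero (x q₁ : ℕ) :
    interT J (x + 1) q₁ 0 = min (J (x + 1) q₁ 0) (J x q₁ 1) := rfl

theorem interT_zero_succ_zero (q₁ : ℕ) :
    interT J 0 (q₁ + 1) 0 = min (J 0 (q₁ + 1) 0) (J 0 q₁ 1) := rfl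

end interT

/-- With `a, b, c, d` standing for `J(x,q₁,0), J(x,q₁,1), J(x+1,q₁,0), J(x+1,q₁,1)` and `p` for the
predecessor value, this is the inequality (F5) for `T`. -/
theorem add_min_le_min_add {a b c d p : ℝ} (hsup : b + c ≤ a + d) (hconv : 2 * b ≤ p + d) :
    b + min c b ≤ min a p + d := by
  rw [← min_add_add_right]
  exact le_min (by linarith [min_le_left c b]) (by linarith [min_le_right c b])

theorem stmt_10 (J : ℕ → ℕ → Fin 2 → ℝ) (hJ : InClassF J) :
    ∀ x q₁ : ℕ,
      interT J x q₁ 1 + interT J (x + 1) q₁ 0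
        ≤ interT J x q₁ 0 + interT J (x + 1) q₁ 1 := by
  intro x q₁
  simp only [interT_one, interT_succ_zero]
  rcases x with _ | x
  · rcases q₁ with _ | q₁
    · rw [interT_zero_zero_zero]
      linarith [hJ.F5 0 0, min_le_left (J 1 0 0) (J 0 0 1)]
    · rw [interT_zero_succ_zero]
      exact add_min_le_min_add (hJ.F5 0 (q₁ + 1)) (hJ.two_mul_le_pred_add_succ_of_boundary q₁)
  · rw [interT_succ_zero]
    exact add_min_le_min_add (hJ.F5 (x + 1) q₁) (hJ.two_mul_le_pred_add_succ x q₁)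
end
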